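/- There is an RRD strategy in the one-state game with two actions that is not outcome-equivalent to any DRD strategy: the RRD strategy that initially mixes uniformly between a coin-flipping state and an always-b state plays a with positive probability after every consistent history yet assigns probability 1/2 to the play in which a never occurs; no DRD strategy can satisfy both properties. -/

import Mathlib

open Filter
open scoped Classical

/-- A stochastic Mealy machine for the one-state game with two actions
(`true` = action a, `false` = action b). -/
structure OneMealy (n : ℕ) where
  init : Fin n → ℝ
  next : Fin n → Bool → ℝ
  up : Fin n → Bool → Fin n → ℝ

def Proper {n : ℕ} (N : OneMealy n) : Prop :=
  (∀ m, 0 ≤ N.init m) ∧ (∑ m, N.init m) = 1 ∧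
  (∀ m c, 0 ≤ N.next m c) ∧ (∀ m, ∑ c, N.next m c = 1) ∧
  (∀ m c m', 0 ≤ N.up m c m') ∧ ∀ m c, ∑ m', N.up m c m' = 1

def IsDirac {α : Type} (μ : α → ℝ) : Prop := ∃ x, ∀ y, μ y = if y = x then 1 else 0

def DetInit {n : ℕ} (N : OneMealy n) : Prop := IsDirac N.init
def DetNext {n : ℕ} (N : OneMealy n) : Prop := ∀ m, IsDirac (N.next m)
def DetUp {n : ℕ} (N : OneMealy n) : Prop := ∀ m c, IsDirac (N.up m c)

/-- Bayesian update of the memory distribution upon playing action `c`. -/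
noncomputable def ostep {n : ℕ} (N : OneMealy n) (μ : Fin n → ℝ) (c : Bool) :
    Fin n → ℝ :=
  if (∑ m', μ m' * N.next m' c) = 0 then fun m => ∑ m', μ m' * N.up m' c m
  else fun m => (∑ m', μ m' * N.up m' c m * N.next m' c) / (∑ m', μ m' * N.next m' c)

/-- Distribution over memory states after the word `w` of actions. -/
noncomputable def omemDist {n : ℕ} (N : OneMealy n) (w : List Bool) : Fin n → ℝ :=
  w.foldl (ostep N) N.init

/-- The strategy induced by the machine. -/
noncomputable def oStrat {n : ℕ} (N : OneMealy n) (w : List Bool) (c : Bool) : ℝ :=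
  ∑ m, omemDist N w m * N.next m c

/-- Probability of the cylinder of the finite action word `l` under strategy `σ`. -/
def cylProb (σ : List Bool → Bool → ℝ) (l : List Bool) : ℝ :=
  ∏ i ∈ Finset.range l.length, σ (l.take i) (l.getD i false)

/-- Outcome equivalence in the one-state game: identical cylinder probabilities. -/
noncomputable def OEquiv {n k : ℕ} (N : OneMealy n) (B : OneMealy k) : Prop :=
  ∀ w : List Bool, cylProb (oStrat N) w = cylProb (oStrat B) w

/-- Consistency of an action word with a strategy. -/
def consistentW (σ : List Bool → Bool → ℝ) (w : List Bool) : Prop :=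
  ∀ i < w.length, 0 < σ (w.take i) (w.getD i false)

/-! A DRD machine is in a single memory state after every history, so it plays `b` from a finite
set of distributions. If `a` keeps positive probability along `bᵏ`, each of these `b`-probabilities
is at most some `r < 1`, and `bᵏ` has probability at most `rᵏ → 0`. The RRD machine that starts in
a fair-coin state or an always-`b` state with probability `1/2` each keeps `a` possible along `bᵏ`,
yet gives `bᵏ` probability more than `1/2`. -/

open Topology

lemma exists_lt_forall_le_of_finite {ι : Type*} [Finite ι] {p : ι → Prop} {f : ι → ℝ} {a : ℝ}
    (h : ∀ i, p i → f i < a) : ∃ r < a, ∀ i, p i → f i ≤ r := by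
  have hev : ∀ᶠ r in 𝓝[<] a, ∀ i, p i → f i ≤ r := by
    refine eventually_all.2 fun i => ?_
    by_cases hi : p i
    · filter_upwards [Ioo_mem_nhdsLT (h i hi)] with r hr _ using hr.1.le
    · exact Eventually.of_forall fun _ hi' => absurd hi' hi
  obtain ⟨r, hr, hra⟩ := (hev.and self_mem_nhdsWithin).exists
  exact ⟨r, hra, hr⟩

section cylProb

variable (σ : List Bool → Bool → ℝ)

lemma cylProb_nil : cylProb σ [] = 1 := by
  simp [cylProb]

lemma cylProb_snoc (w : List Bool) (c : Bool) :
    cylProb σ (w ++ [c]) = cylProb σ w * σ w c := by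
  have htake : ∀ i < w.length, (w ++ [c]).take i = w.take i := fun i hi => by
    simp [List.take_append, Nat.sub_eq_zero_of_le hi.le]
  have hgetD : ∀ i < w.length, (w ++ [c]).getD i false = w.getD i false := fun i hi => by
    simp [List.getD_eq_getElem?_getD, List.getElem?_append, hi]
  rw [cylProb, List.length_append, List.length_singleton, Finset.prod_range_succ, cylProb]
  congr 1
  · exact Finset.prod_congr rfl fun i hi => by
      rw [htake i (Finset.mem_range.1 hi), hgetD i (Finset.mem_range.1 hi)]
  · simp [List.getD_eq_getElem?_getD]

lemma cylProb_nonneg {σ} (hσ : ∀ w c, 0 ≤ σ w c) (w : List Bool) : 0 ≤ cylProb σ w :=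
  Finset.prod_nonneg fun _ _ => hσ _ _

lemma cylProb_replicate (c : Bool) (j : ℕ) :
    cylProb σ (List.replicate j c) = ∏ i ∈ Finset.range j, σ (List.replicate i c) c := by
  induction j with
  | zero => exact cylProb_nil σ
  | succ j ih => rw [List.replicate_succ', cylProb_snoc, ih, Finset.prod_range_succ]

lemma cylProb_const_replicate (p : Bool → ℝ) (c : Bool) (j : ℕ) :
    cylProb (fun _ => p) (List.replicate j c) = p c ^ j := by
  rw [cylProb_replicate, Finset.prod_const, Finset.card_range]

lemma cylProb_replicate_le_pow {σ} (hσ : ∀ w c, 0 ≤ σ w c) {c : Bool} {r : ℝ}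
    (hr : ∀ i, σ (List.replicate i c) c ≤ r) (j : ℕ) :
    cylProb σ (List.replicate j c) ≤ r ^ j := by
  calc cylProb σ (List.replicate j c) = ∏ i ∈ Finset.range j, σ (List.replicate i c) c :=
        cylProb_replicate σ c j
    _ ≤ ∏ _i ∈ Finset.range j, r := Finset.prod_le_prod (fun _ _ => hσ _ _) fun i _ => hr i
    _ = r ^ j := by rw [Finset.prod_const, Finset.card_range]

end cylProb

section OneMealy

variable {n : ℕ} {N : OneMealy n}

lemma omemDist_snoc (N : OneMealy n) (w : List Bool) (c : Bool) :
    omemDist N (w ++ [c]) = ostep N (omemDist N w) c := by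
  simp [omemDist, List.foldl_append]

lemma ostep_nonneg (hP : Proper N) {μ : Fin n → ℝ} (hμ : ∀ m, 0 ≤ μ m) (c : Bool) (m : Fin n) :
    0 ≤ ostep N μ c m := by
  obtain ⟨-, -, hnext, -, hup, -⟩ := hP
  unfold ostep
  split_ifs
  · exact Finset.sum_nonneg fun _ _ => mul_nonneg (hμ _) (hup _ _ _)
  · exact div_nonneg
      (Finset.sum_nonneg fun _ _ => mul_nonneg (mul_nonneg (hμ _) (hup _ _ _)) (hnext _ _))
      (Finset.sum_nonneg fun _ _ => mul_nonneg (hμ _) (hnext _ _))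

lemma omemDist_nonneg (hP : Proper N) (w : List Bool) (m : Fin n) : 0 ≤ omemDist N w m := by
  induction w using List.reverseRecOn generalizing m with
  | nil => exact hP.1 m
  | append_singleton w c ih => rw [omemDist_snoc]; exact ostep_nonneg hP ih c m

lemma oStrat_nonneg (hP : Proper N) (w : List Bool) (c : Bool) : 0 ≤ oStrat N w c :=
  Finset.sum_nonneg fun m _ => mul_nonneg (omemDist_nonneg hP w m) (hP.2.2.1 m c)

lemma ostep_of_up_eq_self (hup : ∀ m c m', N.up m c m' = if m' = m then 1 else 0)
    (μ : Fin n → ℝ) (c : Bool) (m : Fin n) :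
    ostep N μ c m = if ∑ m', μ m' * N.next m' c = 0 then μ m
      else μ m * N.next m c / ∑ m', μ m' * N.next m' c := by
  unfold ostep
  split_ifs <;> simp [hup, mul_ite, ite_mul]

/-- `omemDist N w` is the posterior of the memory state given `w`; the degenerate branch of
`ostep` is only taken when `w` has probability zero. -/
lemma cylProb_oStrat_of_up_eq_self (hup : ∀ m c m', N.up m c m' = if m' = m then 1 else 0)
    (hP : Proper N) (w : List Bool) :
    cylProb (oStrat N) w = ∑ m, N.init m * cylProb (fun _ => N.next m) w := by
  set W : List Bool → Fin n → ℝ := fun w m => N.init m * cylProb (fun _ => N.next m) w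
  have hW_nonneg : ∀ w m, 0 ≤ W w m := fun w m =>
    mul_nonneg (hP.1 m) (cylProb_nonneg (fun _ c => hP.2.2.1 m c) w)
  suffices h : cylProb (oStrat N) w = ∑ m, W w m ∧ ∀ m, omemDist N w m * ∑ m', W w m' = W w m
    from h.1
  induction w using List.reverseRecOn with
  | nil => simp [W, cylProb_nil, omemDist, hP.2.1]
  | append_singleton w c ih =>
    obtain ⟨hcyl, hpost⟩ := ih
    set D := ∑ m', omemDist N w m' * N.next m' c
    have hW_snoc : ∀ m, W (w ++ [c]) m = W w m * N.next m c := fun m => by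
      simp only [W, cylProb_snoc, mul_assoc]
    have hsum : ∑ m, W (w ++ [c]) m = (∑ m, W w m) * D := by
      simp only [hW_snoc, D, Finset.mul_sum]
      refine Finset.sum_congr rfl fun m _ => ?_
      rw [← hpost m]
      ring
    refine ⟨by rw [cylProb_snoc, hcyl, hsum, oStrat], fun m => ?_⟩
    rw [omemDist_snoc, ostep_of_up_eq_self hup, hsum]
    split_ifs with hD
    · change D = 0 at hD
      have hzero := (Finset.sum_eq_zero_iff_of_nonneg fun m _ => hW_nonneg (w ++ [c]) m).1
        (by rw [hsum, hD, mul_zero])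
      rw [hD, mul_zero, mul_zero, hzero m (Finset.mem_univ m)]
    · change D ≠ 0 at hD
      rw [hW_snoc, ← hpost m]
      change omemDist N w m * N.next m c / D * ((∑ m, W w m) * D) = _
      field_simp

lemma isDirac_ostep (hU : DetUp N) {μ : Fin n → ℝ} (hμ : IsDirac μ) (c : Bool) :
    IsDirac (ostep N μ c) := by
  obtain ⟨m, hm⟩ := hμ
  obtain ⟨m', hm'⟩ := hU m c
  have hD : ∑ m'', μ m'' * N.next m'' c = N.next m c := by simp [hm]
  have hnum : ∀ y, ∑ m'', μ m'' * N.up m'' c y * N.next m'' c = N.up m c y * N.next m c := by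
    simp [hm]
  refine ⟨m', fun y => ?_⟩
  by_cases h0 : N.next m c = 0
  · simp [ostep, h0, hm, hm']
  · simp only [ostep, hD, h0, hnum, if_false, mul_div_assoc, div_self h0, mul_one, hm']

lemma omemDist_isDirac (hI : DetInit N) (hU : DetUp N) (w : List Bool) :
    IsDirac (omemDist N w) := by
  induction w using List.reverseRecOn with
  | nil => exact hI
  | append_singleton w c ih => rw [omemDist_snoc]; exact isDirac_ostep hU ih c

lemma exists_oStrat_eq_next (hI : DetInit N) (hU : DetUp N) (w : List Bool) :
    ∃ m, oStrat N w = N.next m := by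
  obtain ⟨m, hm⟩ := omemDist_isDirac hI hU w
  exact ⟨m, funext fun c => by simp [oStrat, hm]⟩

lemma exists_lt_one_oStrat_false_le (hP : Proper N) (hI : DetInit N) (hU : DetUp N) :
    ∃ r < 1, ∀ w, 0 < oStrat N w true → oStrat N w false ≤ r := by
  have hlt : ∀ m, 0 < N.next m true → N.next m false < 1 := fun m hm => by
    have hsum := hP.2.2.2.1 m
    rw [Fintype.sum_bool] at hsum
    linarith
  obtain ⟨r, hr1, hr⟩ := exists_lt_forall_le_of_finite hlt
  refine ⟨r, hr1, fun w hw => ?_⟩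
  obtain ⟨m, hm⟩ := exists_oStrat_eq_next hI hU w
  rw [hm] at hw ⊢
  exact hr m hw

end OneMealy

noncomputable def coinOrAlwaysB : OneMealy 2 where
  init _ := 1 / 2
  next m c := if m = 0 then 1 / 2 else if c then 0 else 1
  up m _ m' := if m' = m then 1 else 0

lemma coinOrAlwaysB_proper : Proper coinOrAlwaysB := by
  refine ⟨fun _ => by norm_num [coinOrAlwaysB], by norm_num [coinOrAlwaysB],
    fun m c => ?_, fun m => ?_, fun m c m' => ?_, fun m c => ?_⟩ <;>
  fin_cases m <;> simp [coinOrAlwaysB] <;> split_ifs <;> norm_num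

lemma coinOrAlwaysB_detUp : DetUp coinOrAlwaysB :=
  fun m _ => ⟨m, fun _ => by simp [coinOrAlwaysB]⟩

lemma cylProb_coinOrAlwaysB (w : List Bool) :
    cylProb (oStrat coinOrAlwaysB) w =
      1 / 2 * cylProb (fun _ _ => 1 / 2) w
        + 1 / 2 * cylProb (fun _ c => if c then 0 else 1) w := by
  rw [cylProb_oStrat_of_up_eq_self (fun _ _ _ => by simp [coinOrAlwaysB]) coinOrAlwaysB_proper,
    Fin.sum_univ_two]
  rfl

lemma cylProb_coinOrAlwaysB_replicate_false (j : ℕ) :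
    cylProb (oStrat coinOrAlwaysB) (List.replicate j false) = (1 / 2) ^ (j + 1) + 1 / 2 := by
  rw [cylProb_coinOrAlwaysB, cylProb_const_replicate, cylProb_const_replicate]
  simp [pow_succ]
  ring

lemma cylProb_coinOrAlwaysB_replicate_false_append_true (j : ℕ) :
    cylProb (oStrat coinOrAlwaysB) (List.replicate j false ++ [true]) = (1 / 2) ^ (j + 2) := by
  rw [cylProb_coinOrAlwaysB, cylProb_snoc, cylProb_snoc, cylProb_const_replicate,
    cylProb_const_replicate]
  simp [pow_succ]
  ring

theorem rrd_not_included_in_drd :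
    ∃ (n : ℕ) (N : OneMealy n), Proper N ∧ DetUp N ∧
      ∀ (k : ℕ) (B : OneMealy k), Proper B → DetInit B → DetUp B →
        ¬ OEquiv N B := by
  refine ⟨2, coinOrAlwaysB, coinOrAlwaysB_proper, coinOrAlwaysB_detUp, ?_⟩
  intro k B hP hI hU hE
  have ha : ∀ i, 0 < oStrat B (List.replicate i false) true := fun i => by
    have h := cylProb_snoc (oStrat B) (List.replicate i false) true
    rw [← hE, ← hE, cylProb_coinOrAlwaysB_replicate_false_append_true,
      cylProb_coinOrAlwaysB_replicate_false] at h
    have hpos : (0 : ℝ) < (1 / 2) ^ (i + 2) := by positivity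
    rw [h] at hpos
    exact pos_of_mul_pos_right hpos (by positivity)
  obtain ⟨r, hr1, hr⟩ := exists_lt_one_oStrat_false_le hP hI hU
  obtain ⟨j, hj⟩ := exists_pow_lt_of_lt_one (by norm_num : (0 : ℝ) < 1 / 2) hr1
  have hle := cylProb_replicate_le_pow (oStrat_nonneg hP) (fun i => hr _ (ha i)) j
  rw [← hE, cylProb_coinOrAlwaysB_replicate_false] at hle
  have : (0 : ℝ) < (1 / 2) ^ (j + 1) := by positivity
  linarith
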